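/- arXiv:1709.01494 — 3 statements merged into one kernel-verified Lean document; each statement's English description precedes it below -/
import Mathlib

section
/- For any tree T with n nodes and any integer parameter x ≥ 2, the maximum rank assigned by the recursive ranking procedure (leaves get rank 1; an internal node gets rank r_max+1 if at least x of its children have the maximum child rank r_max, otherwise rank r_max) is at most ⌈log_x n⌉. -/
/-!
If `v` has rank `r ≥ 2`, its subtree has more than `x ^ (r - 1)` nodes. Either `v` inherits
the rank from a child whose subtree is strictly smaller, or at least `x` children of rank `r - 1`
have pairwise disjoint subtrees of at least `x ^ (r - 2)` nodes each, which together with `v`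
give more than `x ^ (r - 1)` nodes. As a subtree has at most `n` nodes, `x ^ (r - 1) < n`,
that is, `r - 1 < ⌈log_x n⌉`.
-/

open Finset Relation

theorem Relation.TransGen.self_of_reflTransGen {α : Type*} {r : α → α → Prop}
    (hr : Relator.RightUnique r) {a b : α} (ha : TransGen r a a) (hab : ReflTransGen r a b) :
    TransGen r b b := by
  induction hab with
  | refl => exact ha
  | tail _ hbc ih =>
    obtain ⟨c', hbc', hc'b⟩ := TransGen.head'_iff.mp ih
    exact TransGen.tail' (hr hbc' hbc ▸ hc'b) hbc

section Tree

variable {V : Type*} {parent : V → Option V}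

def ChildOf (parent : V → Option V) (w v : V) : Prop := parent w = some v

theorem rightUnique_childOf : Relator.RightUnique (ChildOf parent) :=
  fun _ _ _ h₁ h₂ => Option.some_injective _ (h₁.symm.trans h₂)

theorem not_transGen_childOf_self {root : V} (hroot : parent root = none)
    (hconn : ∀ v, ReflTransGen (ChildOf parent) v root) (v : V) :
    ¬ TransGen (ChildOf parent) v v := fun hv => by
  obtain ⟨c, hc, -⟩ :=
    TransGen.head'_iff.mp (hv.self_of_reflTransGen rightUnique_childOf (hconn v))
  simp [ChildOf, hroot] at hc

variable [Fintype V]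

open scoped Classical in
noncomputable def subtree (parent : V → Option V) (v : V) : Finset V :=
  univ.filter fun u => ReflTransGen (ChildOf parent) u v

theorem mem_subtree {u v : V} : u ∈ subtree parent v ↔ ReflTransGen (ChildOf parent) u v := by
  simp [subtree]

theorem mem_subtree_self (v : V) : v ∈ subtree parent v :=
  mem_subtree.mpr .refl

theorem subtree_subset_of_childOf {w v : V} (h : ChildOf parent w v) :
    subtree parent w ⊆ subtree parent v :=
  fun _ hu => mem_subtree.mpr ((mem_subtree.mp hu).tail h)

theorem notMem_subtree_of_childOf (hacyc : ∀ v, ¬ TransGen (ChildOf parent) v v)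
    {w v : V} (h : ChildOf parent w v) : v ∉ subtree parent w :=
  fun hv => hacyc v (.tail' (mem_subtree.mp hv) h)

theorem disjoint_subtree_of_childOf (hacyc : ∀ v, ¬ TransGen (ChildOf parent) v v)
    {w₁ w₂ v : V} (h₁ : ChildOf parent w₁ v) (h₂ : ChildOf parent w₂ v)
    (hne : w₁ ≠ w₂) :
    Disjoint (subtree parent w₁) (subtree parent w₂) := by
  -- a path from one sibling to the other would pass through `v` and close a cycle
  have incomparable : ∀ {a b}, ChildOf parent a v → ChildOf parent b v → a ≠ b →
      ¬ ReflTransGen (ChildOf parent) a b := by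
    intro a b ha hb hab h
    rcases ReflTransGen.cases_head h with rfl | ⟨c, hac, hcb⟩
    · exact hab rfl
    · exact hacyc v (.tail' (rightUnique_childOf ha hac ▸ hcb) hb)
  refine disjoint_left.mpr fun u hu₁ hu₂ => ?_
  rcases (mem_subtree.mp hu₁).total_of_right_unique rightUnique_childOf (mem_subtree.mp hu₂)
    with h | h
  · exact incomparable h₁ h₂ hne h
  · exact incomparable h₂ h₁ hne.symm h

theorem sum_card_subtree_lt (hacyc : ∀ v, ¬ TransGen (ChildOf parent) v v)
    {v : V} {s : Finset V} (hs : ∀ w ∈ s, ChildOf parent w v) :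
    ∑ w ∈ s, #(subtree parent w) < #(subtree parent v) := by
  classical
  rw [← card_biUnion fun w₁ h₁ w₂ h₂ hne =>
    disjoint_subtree_of_childOf hacyc (hs w₁ h₁) (hs w₂ h₂) hne]
  refine card_lt_card ((ssubset_iff_of_subset ?_).mpr ⟨v, mem_subtree_self v, ?_⟩)
  · exact biUnion_subset.mpr fun w hw => subtree_subset_of_childOf (hs w hw)
  · simpa [mem_biUnion] using fun w hw => notMem_subtree_of_childOf hacyc (hs w hw)

theorem card_subtree_lt_of_childOf (hacyc : ∀ v, ¬ TransGen (ChildOf parent) v v)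
    {w v : V} (h : ChildOf parent w v) :
    #(subtree parent w) < #(subtree parent v) := by
  simpa using sum_card_subtree_lt hacyc (s := {w}) (by simpa using h)

theorem rank_le_one_or_pow_lt_card_subtree [DecidableEq V]
    (hacyc : ∀ v, ¬ TransGen (ChildOf parent) v v)
    {x : ℕ} (hx : 0 < x) {rank : V → ℕ}
    (hleaf : ∀ v : V, (∀ w : V, parent w ≠ some v) → rank v = 1)
    (hinternal : ∀ v : V, (∃ w : V, parent w = some v) →
      rank v =
        if x ≤ (univ.filter (fun w : V => parent w = some v ∧
              rank w = (univ.filter (fun w : V => parent w = some v)).sup rank)).card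
        then (univ.filter (fun w : V => parent w = some v)).sup rank + 1
        else (univ.filter (fun w : V => parent w = some v)).sup rank)
    (v : V) : rank v ≤ 1 ∨ x ^ (rank v - 1) < #(subtree parent v) := by
  induction v using (measure fun v => #(subtree parent v)).wf.induction with
  | _ v ih =>
  have ih_child (w : V) (hw : parent w = some v) :=
    ih w (card_subtree_lt_of_childOf hacyc hw)
  by_cases hv : ∃ w, parent w = some v
  swap
  · exact .inl (hleaf v fun w hw => hv ⟨w, hw⟩).le
  rw [hinternal v hv]
  set children := univ.filter fun w => parent w = some v
  set s := children.sup rank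
  split_ifs with hmax
  · refine .inr ?_
    set maxChildren := univ.filter fun w => parent w = some v ∧ rank w = s
    have hmem {w : V} (hw : w ∈ maxChildren) : parent w = some v ∧ rank w = s := by
      simpa [maxChildren] using hw
    have card_subtree_ge {w : V} (hw : w ∈ maxChildren) :
        x ^ (s - 1) ≤ #(subtree parent w) := by
      rcases ih_child w (hmem hw).1 with h | h
      · rw [(hmem hw).2] at h
        rw [Nat.sub_eq_zero_of_le h, pow_zero]
        exact card_pos.mpr ⟨w, mem_subtree_self w⟩
      · exact (hmem hw).2 ▸ h.le
    calc x ^ (s + 1 - 1) ≤ x * x ^ (s - 1) := by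
          rw [Nat.add_sub_cancel, ← pow_succ']
          exact Nat.pow_le_pow_right hx (by omega)
      _ ≤ #maxChildren * x ^ (s - 1) := Nat.mul_le_mul_right _ hmax
      _ ≤ ∑ w ∈ maxChildren, #(subtree parent w) := by
          simpa using card_nsmul_le_sum maxChildren _ _ fun w hw => card_subtree_ge hw
      _ < #(subtree parent v) := sum_card_subtree_lt hacyc fun w hw => (hmem hw).1
  · obtain ⟨w, hw, hws⟩ :=
      exists_mem_eq_sup children (hv.imp fun _ h => by simpa [children] using h) rank
    have hwv : parent w = some v := by simpa [children] using hw
    rw [show s = rank w from hws]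
    exact (ih_child w hwv).imp_right (·.trans (card_subtree_lt_of_childOf hacyc hwv))

end Tree

/-- In a rooted tree with `n` nodes, the recursive ranking procedure
with threshold parameter `x ≥ 2` (leaves get rank 1; an internal node gets rank
`r_max + 1` if at least `x` of its children achieve the maximum child rank `r_max`,
and rank `r_max` otherwise) assigns every node a rank of at most `⌈log_x n⌉`. -/
theorem max_rank_le_clog {V : Type*} [Fintype V] [DecidableEq V]
    (parent : V → Option V) (root : V)
    (hroot : parent root = none)
    (hconn : ∀ v : V, Relation.ReflTransGen (fun a b => parent a = some b) v root)
    (x : ℕ) (hx : 2 ≤ x)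
    (rank : V → ℕ)
    (hleaf : ∀ v : V, (∀ w : V, parent w ≠ some v) → rank v = 1)
    (hinternal : ∀ v : V, (∃ w : V, parent w = some v) →
      rank v =
        if x ≤ (Finset.univ.filter (fun w : V => parent w = some v ∧
              rank w = (Finset.univ.filter (fun w : V => parent w = some v)).sup rank)).card
        then (Finset.univ.filter (fun w : V => parent w = some v)).sup rank + 1
        else (Finset.univ.filter (fun w : V => parent w = some v)).sup rank)
    (hn : 2 ≤ Fintype.card V) :
    ∀ v : V, rank v ≤ Nat.clog x (Fintype.card V) := by
  intro v
  rcases rank_le_one_or_pow_lt_card_subtree (not_transGen_childOf_self hroot hconn) (by omega)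
    hleaf hinternal v with h | h
  · exact h.trans (Nat.clog_pos hx hn)
  · have : rank v - 1 < Nat.clog x (Fintype.card V) :=
      (Nat.lt_clog_iff_pow_lt hx).mpr (h.trans_le (card_le_univ _))
    omega
end

section
/- In the Decay algorithm, if a listening node v has at least one informed neighbor at the start of a phase, and among v's neighbors exactly d ≥ 1 are informed, then during the round i of the phase in which 2^{i-1} ≤ d ≤ 2^i, the probability that exactly one informed neighbor of v transmits (each transmitting independently with probability 2^{-i}) is at least a positive constant (e.g., at least 1/(2e)). -/
/-!
Write `p = 2^(-i) = 1/N` with `N = 2^i`. From `2^(i-1) ≤ d` we get `N ≤ 2d`, so `dp ≥ 1/2`;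
from `d ≤ N` we get `(1 - p)^(d-1) ≥ (1 - 1/N)^(N-1) = (1 + 1/(N-1))^(-(N-1)) ≥ 1/e`.
-/

open Real

lemma exp_neg_one_le_one_sub_inv_pow_pred (n : ℕ) :
    exp (-1) ≤ (1 - (n : ℝ)⁻¹) ^ (n - 1) := by
  rcases n with _ | _ | m
  · simp
  · simp
  · have h : 1 - ((m + 2 : ℕ) : ℝ)⁻¹ = (1 + ((m + 1 : ℕ) : ℝ)⁻¹)⁻¹ := by
      push_cast
      field_simp
      ring
    rw [show m + 2 - 1 = m + 1 by omega, h, inv_pow, exp_neg]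
    exact inv_anti₀ (by positivity) one_add_inv_pow_le_exp

lemma exp_neg_one_le_one_sub_inv_pow_of_le {d n : ℕ} (h : d ≤ n) :
    exp (-1) ≤ (1 - (n : ℝ)⁻¹) ^ (d - 1) := by
  have hn : (n : ℝ)⁻¹ ≤ 1 := by
    rcases n.eq_zero_or_pos with rfl | hn
    · simp
    · exact inv_le_one_of_one_le₀ (by exact_mod_cast hn)
  exact (exp_neg_one_le_one_sub_inv_pow_pred n).trans
    (pow_le_pow_of_le_one (by linarith) (sub_le_self _ (by positivity)) (by omega))

theorem decay_round_success_prob_general (d i : ℕ)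
    (hlow : 2 ^ (i - 1) ≤ d) (hhigh : d ≤ 2 ^ i) :
    (1 : ℝ) / (2 * Real.exp 1) ≤
      (d : ℝ) * (2 : ℝ) ^ (-(i : ℤ)) * (1 - (2 : ℝ) ^ (-(i : ℤ))) ^ (d - 1) := by
  have hp : (2 : ℝ) ^ (-(i : ℤ)) = ((2 ^ i : ℕ) : ℝ)⁻¹ := by
    rw [zpow_neg, zpow_natCast, Nat.cast_pow, Nat.cast_ofNat]
  have hhalf : (1 : ℝ) / 2 ≤ d * ((2 ^ i : ℕ) : ℝ)⁻¹ := by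
    have h2d : 2 ^ i ≤ 2 * d :=
      calc 2 ^ i ≤ 2 ^ (i - 1 + 1) := Nat.pow_le_pow_right two_pos (by omega)
        _ ≤ 2 * d := by rw [pow_succ']; omega
    rw [← div_eq_mul_inv, div_le_div_iff₀ two_pos (by positivity)]
    exact_mod_cast (by omega : 1 * 2 ^ i ≤ d * 2)
  rw [hp]
  calc (1 : ℝ) / (2 * exp 1) = 1 / 2 * exp (-1) := by rw [exp_neg]; ring
    _ ≤ _ := mul_le_mul hhalf (exp_neg_one_le_one_sub_inv_pow_of_le hhigh)
      (exp_pos _).le (by positivity)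

/-- In the Decay algorithm, if a listening node `v` has `d ≥ 1` informed
neighbors, then in the round `i` of the phase with `2^(i-1) ≤ d ≤ 2^i` (each informed
neighbor transmitting independently with probability `2^(-i)`), the probability that
exactly one informed neighbor transmits, namely `d · 2^(-i) · (1 - 2^(-i))^(d-1)`,
is at least the positive constant `1/(2e)`. -/
theorem decay_round_success_prob (d i : ℕ) (hd : 1 ≤ d) (hi : 1 ≤ i)
    (hlow : 2 ^ (i - 1) ≤ d) (hhigh : d ≤ 2 ^ i) :
    (1 : ℝ) / (2 * Real.exp 1) ≤
      (d : ℝ) * (2 : ℝ) ^ (-(i : ℤ)) * (1 - (2 : ℝ) ^ (-(i : ℤ))) ^ (d - 1) :=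
  decay_round_success_prob_general d i hlow hhigh
end

section
/- In a bipartite graph where one side A consists of informed nodes and the other side B of uninformed nodes, one phase of the Decay algorithm (O(log n) rounds, where in round i each node of A transmits independently with probability 2^{-i}) informs any fixed node of B that has at least one neighbor in A with probability at least a positive constant. -/
/-!
In round `i` of the phase, `b` is informed with probability `d x (1 - x)^(d-1)` where
`x = 2^(-i)`, a quantity that always lies in `[0, 1]`. At the round `i = ⌈log₂ d⌉ + 1`,
which lies within the phase because `d ≤ n`, the expected number `d x` of transmitting
neighbours is in `[1/4, 1/2]`, and Bernoulli's inequality then bounds the success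
probability of that single round below by `1/8`. Hence the phase fails with probability
at most `7/8`.
-/

open Finset

/-- The probability that exactly one of `d` independent transmitters, each active with
probability `x`, transmits. -/
def exactlyOneProb (d : ℕ) (x : ℝ) : ℝ := d * x * (1 - x) ^ (d - 1)

lemma exactlyOneProb_nonneg (d : ℕ) {x : ℝ} (hx₀ : 0 ≤ x) (hx₁ : x ≤ 1) :
    0 ≤ exactlyOneProb d x :=
  mul_nonneg (by positivity) (pow_nonneg (sub_nonneg.2 hx₁) _)

-- It is the `k = 1` term of the binomial expansion of `(x + (1 - x))^d = 1`.
lemma exactlyOneProb_le_one {d : ℕ} (hd : 1 ≤ d) {x : ℝ} (hx₀ : 0 ≤ x) (hx₁ : x ≤ 1) :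
    exactlyOneProb d x ≤ 1 := by
  have hterm : ∀ k ∈ range (d + 1), 0 ≤ x ^ k * (1 - x) ^ (d - k) * d.choose k :=
    fun k _ ↦ mul_nonneg (mul_nonneg (pow_nonneg hx₀ _) (pow_nonneg (sub_nonneg.2 hx₁) _))
      (Nat.cast_nonneg _)
  calc exactlyOneProb d x = x ^ 1 * (1 - x) ^ (d - 1) * d.choose 1 := by
        simp only [exactlyOneProb, pow_one, Nat.choose_one_right]; ring
    _ ≤ ∑ k ∈ range (d + 1), x ^ k * (1 - x) ^ (d - k) * d.choose k :=
        single_le_sum hterm (mem_range.2 (by omega))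
    _ = 1 := by rw [← add_pow, add_sub_cancel, one_pow]

lemma one_eighth_le_exactlyOneProb {d : ℕ} {x : ℝ} (hx₀ : 0 ≤ x) (hlo : 1 / 4 ≤ d * x)
    (hhi : d * x ≤ 1 / 2) : 1 / 8 ≤ exactlyOneProb d x := by
  have hd : 1 ≤ d := by
    by_contra! h
    obtain rfl : d = 0 := by omega
    norm_num at hlo
  have hdR : (1 : ℝ) ≤ d := by exact_mod_cast hd
  have hx : x ≤ 1 / 2 := by nlinarith
  have hbernoulli : 1 + ((d - 1 : ℕ) : ℝ) * (-x) ≤ (1 - x) ^ (d - 1) := by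
    simpa only [← sub_eq_add_neg] using one_add_mul_le_pow (by linarith : (-2 : ℝ) ≤ -x) (d - 1)
  have hpow : 1 / 2 ≤ (1 - x) ^ (d - 1) := by
    rw [Nat.cast_sub hd, Nat.cast_one] at hbernoulli
    nlinarith
  calc (1 / 8 : ℝ) = 1 / 4 * (1 / 2) := by norm_num
    _ ≤ d * x * (1 - x) ^ (d - 1) := mul_le_mul hlo hpow (by norm_num) (by linarith)

lemma Nat.pow_clog_lt_mul {b d : ℕ} (hb : 1 < b) (hd : 1 ≤ d) : b ^ Nat.clog b d < b * d := by
  rcases h : Nat.clog b d with _ | k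
  · nlinarith
  · have hk : b ^ k < d := (Nat.lt_clog_iff_pow_lt hb).1 (by omega)
    rw [pow_succ']
    exact Nat.mul_lt_mul_of_pos_left hk (by omega)

lemma mul_two_zpow_neg_clog_mem_Icc {d : ℕ} (hd : 1 ≤ d) :
    (d : ℝ) * 2 ^ (-((Nat.clog 2 d + 1 : ℕ) : ℤ)) ∈ Set.Icc (1 / 4) (1 / 2) := by
  have hle : (d : ℝ) ≤ 2 ^ Nat.clog 2 d := by exact_mod_cast Nat.le_pow_clog one_lt_two d
  have hlt : (2 : ℝ) ^ Nat.clog 2 d < 2 * d := by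
    exact_mod_cast Nat.pow_clog_lt_mul one_lt_two hd
  have hpos : (0 : ℝ) < 2 ^ Nat.clog 2 d := by positivity
  rw [zpow_neg, zpow_natCast, pow_succ, ← div_eq_mul_inv, Set.mem_Icc,
    le_div_iff₀ (by positivity), div_le_iff₀ (by positivity)]
  constructor <;> linarith

lemma Finset.prod_le_of_mem_of_le_one {ι R : Type*} [CommSemiring R] [PartialOrder R]
    [IsOrderedRing R] {s : Finset ι} {f : ι → R} {i : ι} {c : R} (hi : i ∈ s)
    (h₀ : ∀ j ∈ s, 0 ≤ f j) (h₁ : ∀ j ∈ s, f j ≤ 1) (hc : f i ≤ c) : ∏ j ∈ s, f j ≤ c := by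
  classical
  rw [← mul_prod_erase s f hi]
  calc f i * ∏ j ∈ s.erase i, f j ≤ f i * 1 :=
        mul_le_mul_of_nonneg_left
          (prod_le_one (fun j hj ↦ h₀ j (mem_of_mem_erase hj))
            (fun j hj ↦ h₁ j (mem_of_mem_erase hj)))
          (h₀ i hi)
    _ = f i := mul_one _
    _ ≤ c := hc

lemma two_zpow_neg_mem_Icc {i : ℕ} (hi : 1 ≤ i) : (2 : ℝ) ^ (-(i : ℤ)) ∈ Set.Icc 0 1 :=
  ⟨by positivity, zpow_le_one_of_nonpos₀ one_le_two (by omega)⟩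

/-- One phase of the Decay algorithm (rounds `i = 1, ..., ⌈log₂ n⌉ + 1`,
where in round `i` each informed node transmits independently with probability `2^(-i)`)
informs any fixed uninformed node `b` having `d ≥ 1` informed neighbors (out of at most
`n` nodes) with probability at least a positive constant: the phase success probability
`1 - ∏ᵢ (1 - d·2^(-i)·(1 - 2^(-i))^(d-1))` is bounded below by a constant `c > 0`
independent of `n` and `d`. -/
theorem decay_phase_success : ∃ c : ℝ, 0 < c ∧
    ∀ n d : ℕ, 1 ≤ d → d ≤ n →
      c ≤ 1 - ∏ i ∈ Finset.Icc 1 (Nat.clog 2 n + 1),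
        (1 - (d : ℝ) * (2 : ℝ) ^ (-(i : ℤ)) * (1 - (2 : ℝ) ^ (-(i : ℤ))) ^ (d - 1)) := by
  refine ⟨1 / 8, by norm_num, fun n d hd hdn ↦ ?_⟩
  have hmem : Nat.clog 2 d + 1 ∈ Icc 1 (Nat.clog 2 n + 1) :=
    mem_Icc.2 ⟨by omega, by have := Nat.clog_mono_right 2 hdn; omega⟩
  have hfactor : ∀ i ∈ Icc 1 (Nat.clog 2 n + 1),
      0 ≤ exactlyOneProb d (2 ^ (-(i : ℤ))) ∧ exactlyOneProb d (2 ^ (-(i : ℤ))) ≤ 1 := by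
    intro i hi
    obtain ⟨hx₀, hx₁⟩ := two_zpow_neg_mem_Icc (mem_Icc.1 hi).1
    exact ⟨exactlyOneProb_nonneg d hx₀ hx₁, exactlyOneProb_le_one hd hx₀ hx₁⟩
  obtain ⟨hlo, hhi⟩ := mul_two_zpow_neg_clog_mem_Icc hd
  have hbest := one_eighth_le_exactlyOneProb (by positivity) hlo hhi
  have hprod : ∏ i ∈ Icc 1 (Nat.clog 2 n + 1), (1 - exactlyOneProb d (2 ^ (-(i : ℤ)))) ≤ 7 / 8 :=
    prod_le_of_mem_of_le_one hmem (fun i hi ↦ sub_nonneg.2 (hfactor i hi).2)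
      (fun i hi ↦ sub_le_self _ (hfactor i hi).1) (by linarith)
  unfold exactlyOneProb at hprod
  linarith
end
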